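/- For every real-valued pinwheel instance A = (a_1, a_2, a_3) with a_1 ≥ 12/5, a_2 ≥ 12/5, a_3 ≥ 6, and 1/a_1 + 1/a_2 + 1/a_3 ≤ 5/6, the periodic schedule |121213212123| is valid for A. -/

import Mathlib

/-- A schedule `S : ℤ → Fin k` is valid for the real-valued pinwheel instance
`a : Fin k → ℝ` if for every task `i`, every positive integer `l`, and every
integer `m`, task `i` is performed at least `l` times on the days
`t ∈ [m, m + ⌈l * a i⌉)`. -/
def PinValid {k : ℕ} (a : Fin k → ℝ) (S : ℤ → Fin k) : Prop :=
  ∀ i : Fin k, ∀ l : ℕ, 0 < l → ∀ m : ℤ,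
    (l : ℕ) ≤ ((Finset.Ico m (m + ⌈(l : ℝ) * a i⌉)).filter (fun t => S t = i)).card

/-- A real-valued pinwheel instance is schedulable if some schedule is valid for it. -/
def PinSchedulable {k : ℕ} (a : Fin k → ℝ) : Prop := ∃ S : ℤ → Fin k, PinValid a S

/-- The periodic schedule `|121213212123|`. -/
def S121213212123 : ℤ → Fin 3 := fun t =>
  if t % 12 = 5 ∨ t % 12 = 11 then 2
  else if t % 12 = 1 ∨ t % 12 = 3 ∨ t % 12 = 6 ∨ t % 12 = 8 ∨ t % 12 = 10 then 1 else 0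

namespace ParetoAux

noncomputable def cnt (i : Fin 3) (m L : ℤ) : ℕ :=
  ((Finset.Ico m (m + L)).filter (fun t => S121213212123 t = i)).card

lemma S_period (k t : ℤ) : S121213212123 (12 * k + t) = S121213212123 t := by
  unfold S121213212123
  have h : (12 * k + t) % 12 = t % 12 := by omega
  rw [h]

lemma cnt_shift (i : Fin 3) (k m L : ℤ) : cnt i (12 * k + m) L = cnt i m L := by
  unfold cnt
  have h : 12 * k + m + L = 12 * k + (m + L) := by ring
  rw [h, ← Finset.map_add_left_Ico, Finset.filter_map, Finset.card_map]
  congr 1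
  apply Finset.filter_congr
  intro t _
  simp [addLeftEmbedding, S_period]

lemma cnt_mod (i : Fin 3) (m L : ℤ) : cnt i m L = cnt i (m % 12) L := by
  have h := cnt_shift i (m / 12) (m % 12) L
  rw [← h]
  congr 1
  omega

lemma base : ∀ r ∈ Finset.Ico (0:ℤ) 12,
    cnt 0 r 12 = 5 ∧ 1 ≤ cnt 0 r 3 ∧ 2 ≤ cnt 0 r 5 ∧ 3 ≤ cnt 0 r 8 ∧ 4 ≤ cnt 0 r 10 ∧
    cnt 1 r 12 = 5 ∧ 1 ≤ cnt 1 r 3 ∧ 2 ≤ cnt 1 r 5 ∧ 3 ≤ cnt 1 r 8 ∧ 4 ≤ cnt 1 r 10 ∧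
    cnt 2 r 12 = 2 ∧ 1 ≤ cnt 2 r 6 := by decide

lemma cnt_split (i : Fin 3) (m L1 L2 : ℤ) (h1 : 0 ≤ L1) (h2 : 0 ≤ L2) :
    cnt i m (L1 + L2) = cnt i m L1 + cnt i (m + L1) L2 := by
  unfold cnt
  rw [← Finset.card_union_of_disjoint
      (Finset.disjoint_filter_filter (Finset.Ico_disjoint_Ico_consecutive m (m+L1) (m+L1+L2))),
    ← Finset.filter_union]
  congr 2
  rw [Finset.Ico_union_Ico_eq_Ico (by linarith) (by linarith)]
  congr 1
  ring

lemma cnt_mono (i : Fin 3) (m : ℤ) {L L' : ℤ} (h : L ≤ L') : cnt i m L ≤ cnt i m L' :=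
  Finset.card_le_card (Finset.filter_subset_filter _ (Finset.Ico_subset_Ico_right (by linarith)))

lemma mem_mod (m : ℤ) : m % 12 ∈ Finset.Ico (0:ℤ) 12 :=
  Finset.mem_Ico.mpr ⟨by omega, by omega⟩

lemma cnt_ge (i : Fin 3) (c : ℕ) (hc : ∀ m, cnt i m 12 = c) (w : ℤ) (hw : 0 ≤ w) (b : ℕ)
    (hb : ∀ m, b ≤ cnt i m w) : ∀ q : ℕ, ∀ m, c * q + b ≤ cnt i m (12 * q + w) := by
  intro q
  induction q with
  | zero => intro m; simpa using hb m
  | succ n ih =>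
    intro m
    have he : (12 * ((n:ℤ)+1)) + w = 12 + (12 * n + w) := by ring
    have hcast : (12 * ((n+1 : ℕ) : ℤ)) + w = 12 + (12 * (n:ℤ) + w) := by push_cast; ring
    rw [hcast, cnt_split i m 12 (12 * (n:ℤ) + w) (by norm_num) (by positivity)]
    have h1 := hc m
    have h2 := ih (m + 12)
    have h3 : c * (n + 1) = c * n + c := by ring
    omega

end ParetoAux

open ParetoAux in
theorem pareto_schedule_three_periods
    (a₁ a₂ a₃ : ℝ) (h₁ : a₁ ≥ 12 / 5) (h₂ : a₂ ≥ 12 / 5) (h₃ : a₃ ≥ 6)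
    (hdens : 1 / a₁ + 1 / a₂ + 1 / a₃ ≤ 5 / 6) :
    PinValid ![a₁, a₂, a₃] S121213212123 := by
  have c0 : ∀ m, cnt 0 m 12 = 5 := fun m => by
    rw [cnt_mod]; exact (base _ (mem_mod m)).1
  have c1 : ∀ m, cnt 1 m 12 = 5 := fun m => by
    rw [cnt_mod]; exact (base _ (mem_mod m)).2.2.2.2.2.1
  have c2 : ∀ m, cnt 2 m 12 = 2 := fun m => by
    rw [cnt_mod]; exact (base _ (mem_mod m)).2.2.2.2.2.2.2.2.2.2.1
  intro i l hl m
  -- key: reduce to a₁/a₂/a₃ and to `cnt`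
  fin_cases i
  · -- task 0, period a₁
    show l ≤ cnt 0 m (⌈(l:ℝ) * (![a₁,a₂,a₃] 0)⌉)
    simp only [Matrix.cons_val_zero]
    obtain ⟨q, r, hr, hlq⟩ : ∃ q r : ℕ, r < 5 ∧ l = 5 * q + r := ⟨l / 5, l % 5, by omega, by omega⟩
    have hq0 : (0:ℝ) ≤ (q:ℝ) := Nat.cast_nonneg q
    have key : ∀ w : ℤ, 0 ≤ w → (∀ m', r ≤ cnt 0 m' w) →
        ((12 * (q:ℤ) + w - 1 : ℝ) < (l:ℝ) * a₁) → l ≤ cnt 0 m (⌈(l:ℝ) * a₁⌉) := by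
      intro w hw hb hlt
      have hceil : 12 * (q:ℤ) + w ≤ ⌈(l:ℝ) * a₁⌉ := by
        have := Int.lt_ceil.mpr (show ((12 * (q:ℤ) + w - 1 : ℤ) : ℝ) < (l:ℝ) * a₁ by
          push_cast; push_cast at hlt; linarith)
        omega
      calc l = 5 * q + r := hlq
        _ ≤ cnt 0 m (12 * (q:ℤ) + w) := cnt_ge 0 5 c0 w hw r hb q m
        _ ≤ cnt 0 m (⌈(l:ℝ) * a₁⌉) := cnt_mono 0 m hceil
    have hla : ((l:ℝ)) * (12/5) ≤ (l:ℝ) * a₁ :=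
      mul_le_mul_of_nonneg_left h₁ (Nat.cast_nonneg l)
    interval_cases r
    · exact key 0 le_rfl (fun m' => Nat.zero_le _)
        (by push_cast [hlq]; nlinarith)
    · exact key 3 (by norm_num) (fun m' => by rw [cnt_mod]; exact (base _ (mem_mod m')).2.1)
        (by push_cast [hlq]; nlinarith)
    · exact key 5 (by norm_num) (fun m' => by rw [cnt_mod]; exact (base _ (mem_mod m')).2.2.1)
        (by push_cast [hlq]; nlinarith)
    · exact key 8 (by norm_num) (fun m' => by rw [cnt_mod]; exact (base _ (mem_mod m')).2.2.2.1)
        (by push_cast [hlq]; nlinarith)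
    · exact key 10 (by norm_num) (fun m' => by rw [cnt_mod]; exact (base _ (mem_mod m')).2.2.2.2.1)
        (by push_cast [hlq]; nlinarith)
  · -- task 1, period a₂
    show l ≤ cnt 1 m (⌈(l:ℝ) * (![a₁,a₂,a₃] 1)⌉)
    simp only [Matrix.cons_val_one, Matrix.head_cons]
    obtain ⟨q, r, hr, hlq⟩ : ∃ q r : ℕ, r < 5 ∧ l = 5 * q + r := ⟨l / 5, l % 5, by omega, by omega⟩
    have hq0 : (0:ℝ) ≤ (q:ℝ) := Nat.cast_nonneg q
    have key : ∀ w : ℤ, 0 ≤ w → (∀ m', r ≤ cnt 1 m' w) →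
        ((12 * (q:ℤ) + w - 1 : ℝ) < (l:ℝ) * a₂) → l ≤ cnt 1 m (⌈(l:ℝ) * a₂⌉) := by
      intro w hw hb hlt
      have hceil : 12 * (q:ℤ) + w ≤ ⌈(l:ℝ) * a₂⌉ := by
        have := Int.lt_ceil.mpr (show ((12 * (q:ℤ) + w - 1 : ℤ) : ℝ) < (l:ℝ) * a₂ by
          push_cast; push_cast at hlt; linarith)
        omega
      calc l = 5 * q + r := hlq
        _ ≤ cnt 1 m (12 * (q:ℤ) + w) := cnt_ge 1 5 c1 w hw r hb q m
        _ ≤ cnt 1 m (⌈(l:ℝ) * a₂⌉) := cnt_mono 1 m hceil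
    interval_cases r
    · exact key 0 le_rfl (fun m' => Nat.zero_le _)
        (by push_cast [hlq]; nlinarith)
    · exact key 3 (by norm_num)
        (fun m' => by rw [cnt_mod]; exact (base _ (mem_mod m')).2.2.2.2.2.2.1)
        (by push_cast [hlq]; nlinarith)
    · exact key 5 (by norm_num)
        (fun m' => by rw [cnt_mod]; exact (base _ (mem_mod m')).2.2.2.2.2.2.2.1)
        (by push_cast [hlq]; nlinarith)
    · exact key 8 (by norm_num)
        (fun m' => by rw [cnt_mod]; exact (base _ (mem_mod m')).2.2.2.2.2.2.2.2.1)
        (by push_cast [hlq]; nlinarith)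
    · exact key 10 (by norm_num)
        (fun m' => by rw [cnt_mod]; exact (base _ (mem_mod m')).2.2.2.2.2.2.2.2.2.1)
        (by push_cast [hlq]; nlinarith)
  · -- task 2, period a₃
    show l ≤ cnt 2 m (⌈(l:ℝ) * (![a₁,a₂,a₃] 2)⌉)
    simp only [Matrix.cons_val_two, Matrix.tail_cons, Matrix.head_cons]
    obtain ⟨q, r, hr, hlq⟩ : ∃ q r : ℕ, r < 2 ∧ l = 2 * q + r := ⟨l / 2, l % 2, by omega, by omega⟩
    have hq0 : (0:ℝ) ≤ (q:ℝ) := Nat.cast_nonneg q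
    have key : ∀ w : ℤ, 0 ≤ w → (∀ m', r ≤ cnt 2 m' w) →
        ((12 * (q:ℤ) + w - 1 : ℝ) < (l:ℝ) * a₃) → l ≤ cnt 2 m (⌈(l:ℝ) * a₃⌉) := by
      intro w hw hb hlt
      have hceil : 12 * (q:ℤ) + w ≤ ⌈(l:ℝ) * a₃⌉ := by
        have := Int.lt_ceil.mpr (show ((12 * (q:ℤ) + w - 1 : ℤ) : ℝ) < (l:ℝ) * a₃ by
          push_cast; push_cast at hlt; linarith)
        omega
      calc l = 2 * q + r := hlq
        _ ≤ cnt 2 m (12 * (q:ℤ) + w) := cnt_ge 2 2 c2 w hw r hb q m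
        _ ≤ cnt 2 m (⌈(l:ℝ) * a₃⌉) := cnt_mono 2 m hceil
    interval_cases r
    · exact key 0 le_rfl (fun m' => Nat.zero_le _)
        (by push_cast [hlq]; nlinarith)
    · exact key 6 (by norm_num)
        (fun m' => by rw [cnt_mod]; exact (base _ (mem_mod m')).2.2.2.2.2.2.2.2.2.2.2)
        (by push_cast [hlq]; nlinarith)
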